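/- arXiv:1407.4555 — 3 statements merged into one kernel-verified Lean document; each statement's English description precedes it below -/
import Mathlib

section
/- Define the homogeneous map Ŷ : ℂ → ℝ⁶ with components y₀ = (3r⁴-4r²+3)(1+r²)², y₁ = -(3r⁸-8r⁶+8r⁴-8r²+3), y₂ = √15(z+z̄)(1-r²)(1+r⁴), y₃ = -i√15(z-z̄)(1-r²)(1+r⁴), y₄ = √15(z⁴+z̄⁴), y₅ = i√15(z⁴-z̄⁴), where r = |z|. Then y₁² + y₂² + y₃² + y₄² + y₅² = y₀² for all z ∈ ℂ, so y = (y₁,…,y₅)/y₀ takes values in S⁴ wherever y₀ ≠ 0. -/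
open Complex

/-- Homogeneous map `Ŷ : ℂ → ℝ⁶` (components written as complex numbers; all are real),
with `r² = z·conj z`. -/
noncomputable def Yhat (z : ℂ) : Fin 6 → ℂ :=
  let zb := (starRingEnd ℂ) z
  let r2 : ℂ := z * zb
  ![(3 * r2 ^ 2 - 4 * r2 + 3) * (1 + r2) ^ 2,
    -(3 * r2 ^ 4 - 8 * r2 ^ 3 + 8 * r2 ^ 2 - 8 * r2 + 3),
    (Real.sqrt 15 : ℂ) * (z + zb) * (1 - r2) * (1 + r2 ^ 2),
    -I * (Real.sqrt 15 : ℂ) * (z - zb) * (1 - r2) * (1 + r2 ^ 2),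
    (Real.sqrt 15 : ℂ) * (z ^ 4 + zb ^ 4),
    I * (Real.sqrt 15 : ℂ) * (z ^ 4 - zb ^ 4)]

/-- `y₁² + y₂² + y₃² + y₄² + y₅² = y₀²` for all `z ∈ ℂ`, so `(y₁,…,y₅)/y₀` takes values in `S⁴`
wherever `y₀ ≠ 0`. -/
theorem Yhat_sum_of_squares (z : ℂ) :
    (Yhat z 1) ^ 2 + (Yhat z 2) ^ 2 + (Yhat z 3) ^ 2 + (Yhat z 4) ^ 2 + (Yhat z 5) ^ 2
      = (Yhat z 0) ^ 2 ∧
    (Yhat z 0 ≠ 0 →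
      ∑ i : Fin 5, (Yhat z i.succ / Yhat z 0) ^ 2 = 1) := by
  have hs : ((Real.sqrt 15 : ℝ) : ℂ) ^ 2 = 15 := by
    norm_cast
    rw [Real.sq_sqrt] <;> norm_num
  have key : (Yhat z 1) ^ 2 + (Yhat z 2) ^ 2 + (Yhat z 3) ^ 2 + (Yhat z 4) ^ 2 + (Yhat z 5) ^ 2
      = (Yhat z 0) ^ 2 := by
    set zb := (starRingEnd ℂ) z with hzb
    have e0 : Yhat z 0 = (3 * (z*zb) ^ 2 - 4 * (z*zb) + 3) * (1 + (z*zb)) ^ 2 := rfl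
    have e1 : Yhat z 1 = -(3 * (z*zb) ^ 4 - 8 * (z*zb) ^ 3 + 8 * (z*zb) ^ 2 - 8 * (z*zb) + 3) := rfl
    have e2 : Yhat z 2 = (Real.sqrt 15 : ℂ) * (z + zb) * (1 - (z*zb)) * (1 + (z*zb) ^ 2) := rfl
    have e3 : Yhat z 3 = -I * (Real.sqrt 15 : ℂ) * (z - zb) * (1 - (z*zb)) * (1 + (z*zb) ^ 2) := rfl
    have e4 : Yhat z 4 = (Real.sqrt 15 : ℂ) * (z ^ 4 + zb ^ 4) := rfl
    have e5 : Yhat z 5 = I * (Real.sqrt 15 : ℂ) * (z ^ 4 - zb ^ 4) := rfl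
    rw [e0, e1, e2, e3, e4, e5]
    ring_nf
    rw [Complex.I_sq, hs]
    ring
  refine ⟨key, fun h0 => ?_⟩
  rw [Fin.sum_univ_five]
  simp only [div_pow]
  rw [← add_div, ← add_div, ← add_div, ← add_div]
  show ((Yhat z 1) ^ 2 + (Yhat z 2) ^ 2 + (Yhat z 3) ^ 2 + (Yhat z 4) ^ 2 + (Yhat z 5) ^ 2) / _ = 1
  rw [key, div_self (pow_ne_zero _ h0)]
end

section
/- The map Ŷ with components y₀ = (3r⁴-4r²+3)(1+r²)², y₁ = -(3r⁸-8r⁶+8r⁴-8r²+3), y₂ = √15(z+z̄)(1-r²)(1+r⁴), y₃ = -i√15(z-z̄)(1-r²)(1+r⁴), y₄ = √15(z⁴+z̄⁴), y₅ = i√15(z⁴-z̄⁴) satisfies Ŷ(-1/z̄) = r⁻⁸ · Ŷ(z) for all z ∈ ℂ \ {0}; consequently the projective map y = (y₁,…,y₅)/y₀ is invariant under z ↦ -1/z̄ and descends to ℝP². -/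
open Complex

set_option maxHeartbeats 1000000 in
/-- `Ŷ(-1/conj z) = r⁻⁸·Ŷ(z)` for `z ≠ 0`; consequently the projective map
`y = (y₁,…,y₅)/y₀` is invariant under `z ↦ -1/conj z` and descends to `ℝP²`. -/
theorem Yhat_equivariance (z : ℂ) (hz : z ≠ 0) :
    (∀ j : Fin 6,
      Yhat (-1 / (starRingEnd ℂ) z) j = (z * (starRingEnd ℂ) z) ^ (-4 : ℤ) * Yhat z j) ∧
    (∀ j : Fin 6,
      Yhat (-1 / (starRingEnd ℂ) z) j / Yhat (-1 / (starRingEnd ℂ) z) 0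
        = Yhat z j / Yhat z 0) := by
  have hzb : (starRingEnd ℂ) z ≠ 0 := by
    simpa using hz
  have h1 : ∀ j : Fin 6,
      Yhat (-1 / (starRingEnd ℂ) z) j = (z * (starRingEnd ℂ) z) ^ (-4 : ℤ) * Yhat z j := by
    intro j
    have hc : (starRingEnd ℂ) (-1 / (starRingEnd ℂ) z) = -1 / z := by
      simp [map_div₀]
    have hpow : (z * (starRingEnd ℂ) z) ^ (-4 : ℤ) = ((z * (starRingEnd ℂ) z) ^ 4)⁻¹ := by
      rw [zpow_neg]; norm_cast
    have e : (-1 / (starRingEnd ℂ) z) * (-1 / z) = (z * (starRingEnd ℂ) z)⁻¹ := by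
      field_simp
    have hs : z * (starRingEnd ℂ) z ≠ 0 := mul_ne_zero hz hzb
    fin_cases j
    · simp only [Yhat, hc, hpow, Fin.zero_eta, Matrix.cons_val_zero]
      rw [e]
      generalize z * (starRingEnd ℂ) z = s at hs ⊢
      field_simp
      ring
    · simp only [Yhat, hc, hpow, Fin.mk_one, Matrix.cons_val_one, Matrix.head_cons, Matrix.cons_val_zero]
      rw [e]
      generalize z * (starRingEnd ℂ) z = s at hs ⊢
      field_simp
      ring
    · simp only [Yhat, hc, hpow, Fin.reduceFinMk, Matrix.cons_val, Matrix.cons_val_succ, Matrix.cons_val_zero]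
      field_simp
      ring
    · simp only [Yhat, hc, hpow, Fin.reduceFinMk, Matrix.cons_val, Matrix.cons_val_succ, Matrix.cons_val_zero]
      field_simp
      ring
    · simp only [Yhat, hc, hpow, Fin.reduceFinMk, Matrix.cons_val, Matrix.cons_val_succ, Matrix.cons_val_zero]
      field_simp
    · simp only [Yhat, hc, hpow, Fin.reduceFinMk, Matrix.cons_val, Matrix.cons_val_succ, Matrix.cons_val_zero]
      field_simp
  refine ⟨h1, fun j => ?_⟩
  rw [h1 j, h1 0, mul_div_mul_left]
  exact zpow_ne_zero _ (mul_ne_zero hz hzb)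
end

section
/- Define Ỹ : ℂ → ℝ⁶ with components y₀ = 5 + 7r² + 7r¹² + 5r¹⁴, y₁ = -5 + 7r² + 7r¹² - 5r¹⁴, y₂ = √35(z+z̄)(1-r¹²), y₃ = -i√35(z-z̄)(1-r¹²), y₄ = √35(z⁶+z̄⁶)(1+r²), y₅ = i√35(z⁶-z̄⁶)(1+r²), where r = |z|. Then y₁² + y₂² + y₃² + y₄² + y₅² = y₀², and Ỹ(-1/z̄) = r⁻¹⁴ Ỹ(z) for z ≠ 0. -/
open Complex

/-- The map `Ỹ : ℂ → ℝ⁶` (components written as complex numbers; all are real),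
with `r² = z·conj z`. -/
noncomputable def Ytilde (z : ℂ) : Fin 6 → ℂ :=
  let zb := (starRingEnd ℂ) z
  let r2 : ℂ := z * zb
  ![5 + 7 * r2 + 7 * r2 ^ 6 + 5 * r2 ^ 7,
    -5 + 7 * r2 + 7 * r2 ^ 6 - 5 * r2 ^ 7,
    (Real.sqrt 35 : ℂ) * (z + zb) * (1 - r2 ^ 6),
    -I * (Real.sqrt 35 : ℂ) * (z - zb) * (1 - r2 ^ 6),
    (Real.sqrt 35 : ℂ) * (z ^ 6 + zb ^ 6) * (1 + r2),
    I * (Real.sqrt 35 : ℂ) * (z ^ 6 - zb ^ 6) * (1 + r2)]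

lemma Y0 (z : ℂ) : Ytilde z 0 = 5 + 7 * (z * (starRingEnd ℂ) z) + 7 * (z * (starRingEnd ℂ) z) ^ 6 + 5 * (z * (starRingEnd ℂ) z) ^ 7 := rfl
lemma Y1 (z : ℂ) : Ytilde z 1 = -5 + 7 * (z * (starRingEnd ℂ) z) + 7 * (z * (starRingEnd ℂ) z) ^ 6 - 5 * (z * (starRingEnd ℂ) z) ^ 7 := rfl
lemma Y2 (z : ℂ) : Ytilde z 2 = (Real.sqrt 35 : ℂ) * (z + (starRingEnd ℂ) z) * (1 - (z * (starRingEnd ℂ) z) ^ 6) := rfl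
lemma Y3 (z : ℂ) : Ytilde z 3 = -I * (Real.sqrt 35 : ℂ) * (z - (starRingEnd ℂ) z) * (1 - (z * (starRingEnd ℂ) z) ^ 6) := rfl
lemma Y4 (z : ℂ) : Ytilde z 4 = (Real.sqrt 35 : ℂ) * (z ^ 6 + ((starRingEnd ℂ) z) ^ 6) * (1 + z * (starRingEnd ℂ) z) := rfl
lemma Y5 (z : ℂ) : Ytilde z 5 = I * (Real.sqrt 35 : ℂ) * (z ^ 6 - ((starRingEnd ℂ) z) ^ 6) * (1 + z * (starRingEnd ℂ) z) := rfl

/-- `y₁² + … + y₅² = y₀²`, and `Ỹ(-1/conj z) = r⁻¹⁴·Ỹ(z)` for `z ≠ 0`. -/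
theorem Ytilde_properties :
    (∀ z : ℂ,
      (Ytilde z 1) ^ 2 + (Ytilde z 2) ^ 2 + (Ytilde z 3) ^ 2 + (Ytilde z 4) ^ 2
        + (Ytilde z 5) ^ 2 = (Ytilde z 0) ^ 2) ∧
    (∀ z : ℂ, z ≠ 0 → ∀ j : Fin 6,
      Ytilde (-1 / (starRingEnd ℂ) z) j = (z * (starRingEnd ℂ) z) ^ (-7 : ℤ) * Ytilde z j) := by
  have h35 : ((Real.sqrt 35 : ℝ) : ℂ) ^ 2 = 35 := by
    rw [← ofReal_pow, Real.sq_sqrt (by norm_num)]; norm_num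
  constructor
  · intro z
    rw [Y0, Y1, Y2, Y3, Y4, Y5]
    set w := (starRingEnd ℂ) z with hw
    linear_combination (4*(z*w*(1-(z*w)^6)^2 + z^6*w^6*(1+z*w)^2)) * h35
      + (((Real.sqrt 35:ℝ):ℂ)^2 * ((z-w)^2*(1-(z*w)^6)^2 + (z^6-w^6)^2*(1+z*w)^2)) * I_sq
  · intro z hz j
    have hw : (starRingEnd ℂ) z ≠ 0 := by simpa using hz
    have hc : (starRingEnd ℂ) (-1 / (starRingEnd ℂ) z) = -1 / z := by
      simp [map_div₀]
    have hp : (z * (starRingEnd ℂ) z) ^ (-7 : ℤ) = ((z * (starRingEnd ℂ) z) ^ 7)⁻¹ := by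
      rw [zpow_neg]; norm_cast
    have key : ∀ k : Fin 6, Ytilde (-1 / (starRingEnd ℂ) z) k = (z * (starRingEnd ℂ) z) ^ (-7 : ℤ) * Ytilde z k := by
      have e0 : Ytilde (-1 / (starRingEnd ℂ) z) 0 = (z * (starRingEnd ℂ) z) ^ (-7 : ℤ) * Ytilde z 0 := by
        rw [Y0, Y0, hc, hp]; field_simp; ring
      have e1 : Ytilde (-1 / (starRingEnd ℂ) z) 1 = (z * (starRingEnd ℂ) z) ^ (-7 : ℤ) * Ytilde z 1 := by
        rw [Y1, Y1, hc, hp]; field_simp; ring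
      have e2 : Ytilde (-1 / (starRingEnd ℂ) z) 2 = (z * (starRingEnd ℂ) z) ^ (-7 : ℤ) * Ytilde z 2 := by
        rw [Y2, Y2, hc, hp]; field_simp; ring
      have e3 : Ytilde (-1 / (starRingEnd ℂ) z) 3 = (z * (starRingEnd ℂ) z) ^ (-7 : ℤ) * Ytilde z 3 := by
        rw [Y3, Y3, hc, hp]; field_simp; ring
      have e4 : Ytilde (-1 / (starRingEnd ℂ) z) 4 = (z * (starRingEnd ℂ) z) ^ (-7 : ℤ) * Ytilde z 4 := by
        rw [Y4, Y4, hc, hp]; field_simp; ring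
      have e5 : Ytilde (-1 / (starRingEnd ℂ) z) 5 = (z * (starRingEnd ℂ) z) ^ (-7 : ℤ) * Ytilde z 5 := by
        rw [Y5, Y5, hc, hp]; field_simp; ring
      intro k
      fin_cases k
      exacts [e0, e1, e2, e3, e4, e5]
    exact key j
end
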